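/- For any HOL proposition φ (a HOL term of type bool), with free type variables α1,…,αn and free term variables x1:A1,…,xn:An, the translation of φ as a type is a well-formed Dedukti type: Σ | α1:type,…,αn:type, x1:||A1||,…,xn:||An|| ⊢ ||φ|| : Type, where ||φ|| = proof |φ|. -/

import Mathlib

set_option autoImplicit false

namespace HolDk

/-! ### Dedukti: the λΠ-calculus modulo rewriting, with de Bruijn indices.

Terms `M, N, A, B ::= x | c | Type | Kind | Πx:A.B | λx:A.M | M N`. -/

inductive DTm : Type
  | var   : ℕ → DTm
  | const : ℕ → DTm
  | type  : DTm
  | kind  : DTm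
  | pi    : DTm → DTm → DTm
  | lam   : DTm → DTm → DTm
  | app   : DTm → DTm → DTm
  deriving DecidableEq

namespace DTm

/-- Shift the free de Bruijn indices `≥ c` up by `d`. -/
def shift (d : ℕ) : ℕ → DTm → DTm
  | c, var n => if n < c then var n else var (n + d)
  | _, const k => const k
  | _, type => type
  | _, kind => kind
  | c, pi A B => pi (shift d c A) (shift d (c+1) B)
  | c, lam A M => lam (shift d c A) (shift d (c+1) M)
  | c, app M N => app (shift d c M) (shift d c N)

/-- Lift a simultaneous substitution under one binder. -/
def liftSub (σ : ℕ → DTm) : ℕ → DTm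
  | 0 => var 0
  | n+1 => shift 1 0 (σ n)

/-- Simultaneous substitution. -/
def subst (σ : ℕ → DTm) : DTm → DTm
  | var n => σ n
  | const k => const k
  | type => type
  | kind => kind
  | pi A B => pi (subst σ A) (subst (liftSub σ) B)
  | lam A M => lam (subst σ A) (subst (liftSub σ) M)
  | app M N => app (subst σ M) (subst σ N)

/-- Substitution `[N/x]M` of `N` for the de Bruijn index `0` in `M`. -/
def subst0 (M N : DTm) : DTm :=
  subst (fun n => match n with | 0 => N | n+1 => var n) M

/-- Non-dependent product `A → B`. -/
def arr (A B : DTm) : DTm := pi A (shift 1 0 B)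

end DTm

/-- Signatures `Σ ::= · | Σ, c : A | Σ, [Γ] M ⇝ N`. -/
inductive Sig : Type
  | empty : Sig
  | pushConst : Sig → ℕ → DTm → Sig
  | pushRule : Sig → List DTm → DTm → DTm → Sig

/-- Lookup of the type of a constant in a signature. -/
def Sig.constType : Sig → ℕ → Option DTm
  | .empty, _ => none
  | .pushConst S c A, d => if d = c then some A else S.constType d
  | .pushRule S _ _ _, d => S.constType d

/-- Membership of a rewrite rule `[Γ] M ⇝ N` in a signature. -/
def Sig.hasRule : Sig → List DTm → DTm → DTm → Prop
  | .empty, _, _, _ => False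
  | .pushConst S _ _, G, M, N => S.hasRule G M N
  | .pushRule S G' M' N', G, M, N => (G = G' ∧ M = M' ∧ N = N') ∨ S.hasRule G M N

/-- Pure β-reduction (one step, contextual closure). -/
inductive RedBeta : DTm → DTm → Prop
  | beta (A M N) : RedBeta (.app (.lam A M) N) (M.subst0 N)
  | appL {M M'} (N) : RedBeta M M' → RedBeta (.app M N) (.app M' N)
  | appR (M) {N N'} : RedBeta N N' → RedBeta (.app M N) (.app M N')
  | lamTy {A A'} (M) : RedBeta A A' → RedBeta (.lam A M) (.lam A' M)
  | lamBody (A) {M M'} : RedBeta M M' → RedBeta (.lam A M) (.lam A M')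
  | piL {A A'} (B) : RedBeta A A' → RedBeta (.pi A B) (.pi A' B)
  | piR (A) {B B'} : RedBeta B B' → RedBeta (.pi A B) (.pi A B')

/-- The reduction relation `→βΣ`: β-reduction together with the rewrite rules of
the signature (one step, contextual closure). -/
inductive Red (S : Sig) : DTm → DTm → Prop
  | beta (A M N) : Red S (.app (.lam A M) N) (M.subst0 N)
  | rew {G L R} (σ : ℕ → DTm) : S.hasRule G L R → Red S (L.subst σ) (R.subst σ)
  | appL {M M'} (N) : Red S M M' → Red S (.app M N) (.app M' N)
  | appR (M) {N N'} : Red S N N' → Red S (.app M N) (.app M N')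
  | lamTy {A A'} (M) : Red S A A' → Red S (.lam A M) (.lam A' M)
  | lamBody (A) {M M'} : Red S M M' → Red S (.lam A M) (.lam A M')
  | piL {A A'} (B) : Red S A A' → Red S (.pi A B) (.pi A' B)
  | piR (A) {B B'} : Red S B B' → Red S (.pi A B) (.pi A B')

/-- The conversion `≡βΣ`: reflexive symmetric transitive closure of `→βΣ`. -/
def Conv (S : Sig) : DTm → DTm → Prop := Relation.EqvGen (Red S)

mutual
/-- Signature formation `Σ signature`. -/
inductive SigWf : Sig → Prop
  | empty : SigWf .empty
  | pushConst {S : Sig} {c : ℕ} {A s : DTm} : SigWf S → Typed S [] A s →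
      (s = DTm.type ∨ s = DTm.kind) → S.constType c = none →
      SigWf (S.pushConst c A)
  | pushRule {S : Sig} {G : List DTm} {M N A : DTm} : SigWf S →
      Typed S G M A → Typed S G N A → SigWf (S.pushRule G M N)

/-- Context formation `Σ | Γ context` (contexts are lists, head = most recent binding). -/
inductive CtxWf : Sig → List DTm → Prop
  | nil {S : Sig} : SigWf S → CtxWf S []
  | cons {S : Sig} {G : List DTm} {A : DTm} : CtxWf S G → Typed S G A DTm.type →
      CtxWf S (A :: G)

/-- The typing judgment `Σ | Γ ⊢ M : A` of the λΠ-calculus modulo rewriting. -/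
inductive Typed : Sig → List DTm → DTm → DTm → Prop
  | var {S : Sig} {G : List DTm} {n : ℕ} {A : DTm} : CtxWf S G → G[n]? = some A →
      Typed S G (.var n) (A.shift (n+1) 0)
  | const {S : Sig} {G : List DTm} {c : ℕ} {A : DTm} : CtxWf S G →
      S.constType c = some A → Typed S G (.const c) A
  | type {S : Sig} {G : List DTm} : CtxWf S G → Typed S G .type .kind
  | prod {S : Sig} {G : List DTm} {A B s : DTm} : Typed S G A .type →
      Typed S (A :: G) B s → (s = DTm.type ∨ s = DTm.kind) → Typed S G (.pi A B) s
  | abs {S : Sig} {G : List DTm} {A M B : DTm} : Typed S G A .type →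
      Typed S (A :: G) M B → Typed S G (.lam A M) (.pi A B)
  | app {S : Sig} {G : List DTm} {M N A B : DTm} : Typed S G M (.pi A B) →
      Typed S G N A → Typed S G (.app M N) (B.subst0 N)
  | conv {S : Sig} {G : List DTm} {M A B : DTm} : Typed S G M A →
      Typed S G B DTm.type → Conv S A B → Typed S G M B
end

/-! ### HOL -/

/-- HOL types: type variables, `bool`, `ind`, and arrow types. -/
inductive HTy : Type
  | tvar : ℕ → HTy
  | bool : HTy
  | ind  : HTy
  | arr  : HTy → HTy → HTy
  deriving DecidableEq

/-- HOL terms (simply typed λ-terms, de Bruijn indices for term variables),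
with the polymorphic constants `(=_A)` and `select_A`. -/
inductive HTm : Type
  | var    : ℕ → HTm
  | lam    : HTy → HTm → HTm
  | app    : HTm → HTm → HTm
  | eq     : HTy → HTm
  | select : HTy → HTm
  deriving DecidableEq

/-- The HOL proposition `M = N` (at type `A`), i.e. `(=_A) M N`. -/
def HTm.heq (A : HTy) (M N : HTm) : HTm := .app (.app (.eq A) M) N

/-- HOL typing: `Δ ⊢ M : A` where `Δ` types the term variables. -/
inductive HTyped : List HTy → HTm → HTy → Prop
  | var {D : List HTy} {n : ℕ} {A : HTy} : D[n]? = some A → HTyped D (.var n) A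
  | lam {D : List HTy} {A B : HTy} {M : HTm} : HTyped (A :: D) M B →
      HTyped D (.lam A M) (A.arr B)
  | app {D : List HTy} {A B : HTy} {M N : HTm} : HTyped D M (A.arr B) →
      HTyped D N A → HTyped D (.app M N) B
  | eq {D : List HTy} {A : HTy} : HTyped D (.eq A) (A.arr (A.arr .bool))
  | select {D : List HTy} {A : HTy} : HTyped D (.select A) ((A.arr .bool).arr A)

namespace HTm

/-- Shift the free term-variable indices `≥ c` up by `d`. -/
def shift (d : ℕ) : ℕ → HTm → HTm
  | c, var n => if n < c then var n else var (n + d)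
  | c, lam A M => lam A (shift d (c+1) M)
  | c, app M N => app (shift d c M) (shift d c N)
  | _, eq A => eq A
  | _, select A => select A

def liftSub (σ : ℕ → HTm) : ℕ → HTm
  | 0 => var 0
  | n+1 => shift 1 0 (σ n)

/-- Simultaneous capture-avoiding substitution of term variables. -/
def substF (σ : ℕ → HTm) : HTm → HTm
  | var n => σ n
  | lam A M => lam A (substF (liftSub σ) M)
  | app M N => app (substF σ M) (substF σ N)
  | eq A => eq A
  | select A => select A

/-- Substitution `[N/x]M` for the de Bruijn index `0`. -/
def subst0 (M N : HTm) : HTm :=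
  substF (fun n => match n with | 0 => N | n+1 => var n) M

/-- Simultaneous (parallel) substitution `M[M₁/x₁, …, Mₙ/xₙ]` given by a list. -/
def substL (σ : List HTm) (M : HTm) : HTm :=
  substF (fun n => (σ[n]?).getD (var n)) M

end HTm

/-- Type substitution `A[A₁/α₁, …, Aₘ/αₘ]` on HOL types. -/
def HTy.tsub (θ : List HTy) : HTy → HTy
  | .tvar n => (θ[n]?).getD (.tvar n)
  | .bool => .bool
  | .ind => .ind
  | .arr A B => .arr (A.tsub θ) (B.tsub θ)

/-- Type substitution on HOL terms. -/
def HTm.tsub (θ : List HTy) : HTm → HTm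
  | .var n => .var n
  | .lam A M => .lam (A.tsub θ) (M.tsub θ)
  | .app M N => .app (M.tsub θ) (N.tsub θ)
  | .eq A => .eq (A.tsub θ)
  | .select A => .select (A.tsub θ)

/-- All free type variables of a HOL type are `< n`. -/
def HTy.tvLt (n : ℕ) : HTy → Prop
  | .tvar j => j < n
  | .bool => True
  | .ind => True
  | .arr A B => A.tvLt n ∧ B.tvLt n

/-- All free type variables of a HOL term are `< n`. -/
def HTm.tvLt (n : ℕ) : HTm → Prop
  | .var _ => True
  | .lam A M => A.tvLt n ∧ M.tvLt n
  | .app M N => M.tvLt n ∧ N.tvLt n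
  | .eq A => A.tvLt n
  | .select A => A.tvLt n

/-- One-step β-reduction of HOL terms (contextual closure). -/
inductive HBeta : HTm → HTm → Prop
  | beta (A : HTy) (M N : HTm) : HBeta (.app (.lam A M) N) (M.subst0 N)
  | appL {M M'} (N) : HBeta M M' → HBeta (.app M N) (.app M' N)
  | appR (M) {N N'} : HBeta N N' → HBeta (.app M N) (.app M N')
  | lamBody (A) {M M'} : HBeta M M' → HBeta (.lam A M) (.lam A M')

/-- HOL derivations `Γ ⊢ φ` (Fig. 2), in an ambient term-variable context `Δ`,
with hypotheses `Γ` a finite set of propositions.  The `Subst` rule is split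
into a type-substitution rule and a term-substitution rule. -/
inductive HDeriv : List HTy → Finset HTm → HTm → Type
  | refl {D : List HTy} (A : HTy) (M : HTm) :
      HTyped D M A → HDeriv D ∅ (HTm.heq A M M)
  | absThm {D : List HTy} {G : Finset HTm} (A B : HTy) (M N : HTm) :
      HDeriv (A :: D) (G.image (HTm.shift 1 0)) (HTm.heq B M N) →
      HDeriv D G (HTm.heq (A.arr B) (.lam A M) (.lam A N))
  | appThm {D : List HTy} {G G' : Finset HTm} (A B : HTy) (F Gt M N : HTm) :
      HDeriv D G (HTm.heq (A.arr B) F Gt) → HDeriv D G' (HTm.heq A M N) →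
      HDeriv D (G ∪ G') (HTm.heq B (F.app M) (Gt.app N))
  | beta {D : List HTy} (A B : HTy) (M : HTm) :
      HTyped (A :: D) M B →
      HDeriv (A :: D) ∅ (HTm.heq B (.app (.lam A (M.shift 1 1)) (.var 0)) M)
  | assume {D : List HTy} (φ : HTm) : HTyped D φ .bool → HDeriv D {φ} φ
  | eqMp {D : List HTy} {G G' : Finset HTm} (φ ψ : HTm) :
      HDeriv D G (HTm.heq .bool φ ψ) → HDeriv D G' φ →
      HDeriv D (G ∪ G') ψ
  | deductAntiSym {D : List HTy} {G G' : Finset HTm} (φ ψ : HTm) :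
      HDeriv D G φ → HDeriv D G' ψ →
      HDeriv D (G.erase ψ ∪ G'.erase φ) (HTm.heq .bool φ ψ)
  | typeSubst {D : List HTy} {G : Finset HTm} {φ : HTm} (θ : List HTy) :
      HDeriv D G φ →
      HDeriv (D.map (HTy.tsub θ)) (G.image (HTm.tsub θ)) (φ.tsub θ)
  | termSubst {D : List HTy} {G : Finset HTm} {φ : HTm} {D' : List HTy} (σ : List HTm) :
      σ.length = D.length →
      (∀ (i : ℕ) (A : HTy), D[i]? = some A → ∃ t, σ[i]? = some t ∧ HTyped D' t A) →
      HDeriv D G φ →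
      HDeriv D' (G.image (HTm.substL σ)) (HTm.substL σ φ)

/-! ### The Dedukti signature Σ for HOL -/

def cTy : DTm := .const 0
def dBool : DTm := .const 1
def dInd : DTm := .const 2
def tArr (a b : DTm) : DTm := .app (.app (.const 3) a) b
def tTerm (a : DTm) : DTm := .app (.const 4) a
def tEq (a x y : DTm) : DTm := .app (.app (.app (.const 5) a) x) y
def tProof (p : DTm) : DTm := .app (.const 7) p
def dRefl : DTm := .const 8
def dFunExt : DTm := .const 9
def dAppThm : DTm := .const 10
def dPropExt : DTm := .const 11
def dEqMp : DTm := .const 12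
def dImp : DTm := .const 13
def dForall : DTm := .const 14

def tyArrow : DTm := DTm.arr cTy (DTm.arr cTy cTy)
def tyTerm : DTm := DTm.arr cTy .type
def tyEq : DTm := .pi cTy (tTerm (tArr (.var 0) (tArr (.var 0) dBool)))
def tySelect : DTm := .pi cTy (tTerm (tArr (tArr (.var 0) dBool) (.var 0)))
def tyProof : DTm := DTm.arr (tTerm dBool) .type
def tyRefl : DTm :=
  .pi cTy (.pi (tTerm (.var 0)) (tProof (tEq (.var 1) (.var 0) (.var 0))))
def tyFunExt : DTm :=
  .pi cTy (.pi cTy (.pi (tTerm (tArr (.var 1) (.var 0))) (.pi (tTerm (tArr (.var 2) (.var 1)))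
    (DTm.arr
      (.pi (tTerm (.var 3))
        (tProof (tEq (.var 3) (.app (.var 2) (.var 0)) (.app (.var 1) (.var 0)))))
      (tProof (tEq (tArr (.var 3) (.var 2)) (.var 1) (.var 0)))))))
def tyAppThm : DTm :=
  .pi cTy (.pi cTy (.pi (tTerm (tArr (.var 1) (.var 0))) (.pi (tTerm (tArr (.var 2) (.var 1)))
    (.pi (tTerm (.var 3)) (.pi (tTerm (.var 4))
      (DTm.arr (tProof (tEq (tArr (.var 5) (.var 4)) (.var 3) (.var 2)))
        (DTm.arr (tProof (tEq (.var 5) (.var 1) (.var 0)))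
          (tProof (tEq (.var 4) (.app (.var 3) (.var 1)) (.app (.var 2) (.var 0)))))))))))
def tyPropExt : DTm :=
  .pi (tTerm dBool) (.pi (tTerm dBool)
    (DTm.arr (DTm.arr (tProof (.var 0)) (tProof (.var 1)))
      (DTm.arr (DTm.arr (tProof (.var 0)) (tProof (.var 1)))
        (tProof (tEq dBool (.var 1) (.var 0))))))
def tyEqMp : DTm :=
  .pi (tTerm dBool) (.pi (tTerm dBool)
    (DTm.arr (tProof (tEq dBool (.var 1) (.var 0)))
      (DTm.arr (tProof (.var 1)) (tProof (.var 0)))))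

/-- The rewrite rule `[α : type, β : type] term (arrow α β) ⇝ term α → term β`
(in the context list, the head is the most recent variable `β`). -/
def arrowRuleCtx : List DTm := [cTy, cTy]
def arrowRuleL : DTm := tTerm (tArr (.var 1) (.var 0))
def arrowRuleR : DTm := DTm.arr (tTerm (.var 1)) (tTerm (.var 0))

def baseSig : Sig :=
  ((((Sig.empty.pushConst 0 .type).pushConst 1 cTy).pushConst 2 cTy).pushConst 3
    tyArrow).pushConst 4 tyTerm

/-- The HOL signature Σ:
`type : Type`, `bool ind : type`, `arrow : type → type → type`, `term : type → Type`,
`eq`, `select`, the rewrite rule `term (arrow α β) ⇝ term α → term β`,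
`proof : term bool → Type`, and `Refl`, `FunExt`, `AppThm`, `PropExt`, `EqMp`. -/
def holSig : Sig :=
  ((((((((baseSig.pushConst 5 tyEq).pushConst 6 tySelect).pushRule arrowRuleCtx
    arrowRuleL arrowRuleR).pushConst 7 tyProof).pushConst 8 tyRefl).pushConst 9
    tyFunExt).pushConst 10 tyAppThm).pushConst 11 tyPropExt).pushConst 12 tyEqMp

/-! ### The translation -/

/-- Translation `|A|` of a HOL type as a Dedukti term; `ρ` gives the Dedukti
de Bruijn index of each HOL type variable. -/
def transTy (ρ : ℕ → ℕ) : HTy → DTm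
  | .tvar j => .var (ρ j)
  | .bool => dBool
  | .ind => dInd
  | .arr A B => tArr (transTy ρ A) (transTy ρ B)

/-- Lift a variable renaming under one binder. -/
def liftVar (ρ : ℕ → ℕ) : ℕ → ℕ
  | 0 => 0
  | n+1 => ρ n + 1

/-- Translation `|M|` of a HOL term as a Dedukti term; `ρT`, `ρt` give the
Dedukti de Bruijn indices of the free HOL type resp. term variables. -/
def transTm (ρT ρt : ℕ → ℕ) : HTm → DTm
  | .var i => .var (ρt i)
  | .lam A M => .lam (tTerm (transTy ρT A)) (transTm (fun j => ρT j + 1) (liftVar ρt) M)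
  | .app M N => .app (transTm ρT ρt M) (transTm ρT ρt N)
  | .eq A => .app (.const 5) (transTy ρT A)
  | .select A => .app (.const 6) (transTy ρT A)

/-- The Dedukti context `x₁ : ‖A₁‖, …, xₖ : ‖Aₖ‖` translating a HOL
term-variable context (to be placed in front of the `n` type variables). -/
def dTermCtx : List HTy → List DTm
  | [] => []
  | A :: D => tTerm (transTy (fun j => D.length + j) A) :: dTermCtx D

/-- The Dedukti context `‖Γ‖ = h₁ : ‖φ₁‖, …` translating HOL hypotheses;
`k` is the number of HOL term variables in scope. -/
def hypCtx (k : ℕ) : List HTm → List DTm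
  | [] => []
  | φ :: rest =>
      tProof (transTm (fun j => rest.length + k + j) (fun i => rest.length + i) φ) ::
        hypCtx k rest

def mkApps (f : DTm) (args : List DTm) : DTm := args.foldl .app f

def mkTyLams : ℕ → DTm → DTm
  | 0, M => M
  | n+1, M => .lam cTy (mkTyLams n M)

/-- `λx₁ : ‖B₁‖. … λxₖ : ‖Bₖ‖. M` (the head of the list is the innermost binder). -/
def bindTerms (ρT : ℕ → ℕ) : List HTy → DTm → DTm
  | [], M => M
  | A :: D, M => bindTerms ρT D (.lam (tTerm (transTy (fun j => ρT j + D.length) A)) M)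

/-- Translation `|𝒟|` of a HOL derivation as a Dedukti proof term; `ρT`, `ρt`
give the Dedukti indices of free HOL type/term variables, and `ρh` gives the
index of the hypothesis variable `h_φ` for each hypothesis `φ`. -/
def transDeriv : {D : List HTy} → {G : Finset HTm} → {φ : HTm} →
    (ρT ρt : ℕ → ℕ) → (ρh : HTm → ℕ) → HDeriv D G φ → DTm
  | _, _, _, ρT, ρt, _, .refl A M _ =>
      .app (.app dRefl (transTy ρT A)) (transTm ρT ρt M)
  | _, _, _, ρT, ρt, ρh, .absThm A B M N d =>
      .app (.app (.app (.app (.app dFunExt (transTy ρT A)) (transTy ρT B))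
          (transTm ρT ρt (.lam A M))) (transTm ρT ρt (.lam A N)))
        (.lam (tTerm (transTy ρT A))
          (transDeriv (fun j => ρT j + 1) (liftVar ρt)
            (fun χ => ρh (HTm.substF (fun i => .var (i - 1)) χ) + 1) d))
  | _, _, _, ρT, ρt, ρh, .appThm A B F Gt M N d1 d2 =>
      mkApps dAppThm [transTy ρT A, transTy ρT B, transTm ρT ρt F, transTm ρT ρt Gt,
        transTm ρT ρt M, transTm ρT ρt N,
        transDeriv ρT ρt ρh d1, transDeriv ρT ρt ρh d2]
  | _, _, _, ρT, ρt, _, .beta _ B M _ =>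
      .app (.app dRefl (transTy ρT B)) (transTm ρT ρt M)
  | _, _, _, _, _, ρh, .assume φ _ => .var (ρh φ)
  | _, _, _, ρT, ρt, ρh, .eqMp φ ψ d1 d2 =>
      mkApps dEqMp [transTm ρT ρt φ, transTm ρT ρt ψ,
        transDeriv ρT ρt ρh d1, transDeriv ρT ρt ρh d2]
  | _, _, _, ρT, ρt, ρh, .deductAntiSym φ ψ d1 d2 =>
      mkApps dPropExt [transTm ρT ρt φ, transTm ρT ρt ψ,
        .lam (tProof (transTm ρT ρt ψ))
          (transDeriv (fun j => ρT j + 1) (fun i => ρt i + 1)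
            (fun χ => if χ = ψ then 0 else ρh χ + 1) d1),
        .lam (tProof (transTm ρT ρt φ))
          (transDeriv (fun j => ρT j + 1) (fun i => ρt i + 1)
            (fun χ => if χ = φ then 0 else ρh χ + 1) d2)]
  | _, _, _, ρT, ρt, ρh, .typeSubst θ d =>
      mkApps
        (mkTyLams θ.length
          (transDeriv (fun j => if j < θ.length then j else ρT j + θ.length)
            (fun i => ρt i + θ.length)
            (fun χ => ρh (HTm.tsub θ χ) + θ.length) d))
        (θ.reverse.map (transTy ρT))
  | _, _, _, ρT, ρt, ρh, @HDeriv.termSubst D₀ _ _ _ σ _ _ d =>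
      mkApps
        (bindTerms ρT D₀
          (transDeriv (fun j => ρT j + D₀.length)
            (fun i => if i < D₀.length then i else ρt (i - D₀.length) + D₀.length)
            (fun χ => ρh (HTm.substL σ χ) + D₀.length) d))
        (σ.reverse.map (transTm ρT ρt))

/-- All free type variables appearing in a HOL derivation are `< n`. -/
def HDeriv.tvLt (n : ℕ) : {D : List HTy} → {G : Finset HTm} → {φ : HTm} →
    HDeriv D G φ → Prop
  | _, _, _, .refl A M _ => A.tvLt n ∧ M.tvLt n
  | _, _, _, .absThm A B M N d =>
      A.tvLt n ∧ B.tvLt n ∧ M.tvLt n ∧ N.tvLt n ∧ HDeriv.tvLt n d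
  | _, _, _, .appThm A B F Gt M N d1 d2 =>
      A.tvLt n ∧ B.tvLt n ∧ F.tvLt n ∧ Gt.tvLt n ∧ M.tvLt n ∧ N.tvLt n ∧
        HDeriv.tvLt n d1 ∧ HDeriv.tvLt n d2
  | _, _, _, .beta A B M _ => A.tvLt n ∧ B.tvLt n ∧ M.tvLt n
  | _, _, _, .assume φ _ => φ.tvLt n
  | _, _, _, .eqMp φ ψ d1 d2 => φ.tvLt n ∧ ψ.tvLt n ∧ HDeriv.tvLt n d1 ∧ HDeriv.tvLt n d2
  | _, _, _, .deductAntiSym φ ψ d1 d2 =>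
      φ.tvLt n ∧ ψ.tvLt n ∧ HDeriv.tvLt n d1 ∧ HDeriv.tvLt n d2
  | _, _, _, .typeSubst θ d => (∀ A ∈ θ, A.tvLt n) ∧ HDeriv.tvLt (max θ.length n) d
  | _, _, _, .termSubst σ _ _ d => (∀ t ∈ σ, t.tvLt n) ∧ HDeriv.tvLt n d

/-! The translation is typed compositionally. In any Dedukti context that contains the
translated HOL variables, `|A| : type` by induction on `A`, and `|M| : term |A|` by induction
on the HOL typing of `M`; in the cases of λ-abstraction and application the rewrite rule
`term (arrow α β) ⇝ term α → term β` converts between HOL and Dedukti function types. What is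
left is the well-formedness of `Σ` itself, which every context judgment presupposes. The types
of the five axioms of `Σ` are translations of HOL statements built from propositions by
implication and quantification over terms, so they are typed by the same induction. -/

namespace DTm

theorem shift_shift (d e : ℕ) :
    ∀ (M : DTm) (c : ℕ), shift d c (shift e c M) = shift (d + e) c M
  | var n, c => by
      by_cases h : n < c
      · simp [shift, h]
      · simp [shift, h, show ¬n + e < c by omega]; omega
  | const _, _ | type, _ | kind, _ => rfl
  | pi A B, c | lam A B, c => by simp [shift, shift_shift d e A c, shift_shift d e B (c + 1)]
  | app M N, c => by simp [shift, shift_shift d e M c, shift_shift d e N c]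

theorem subst_shift_one_eq_self {σ : ℕ → DTm} {c : ℕ}
    (hσ : ∀ m, σ (if m < c then m else m + 1) = var m) (M : DTm) : subst σ (shift 1 c M) = M := by
  induction M generalizing σ c with
  | var n =>
      have := hσ n
      simp only [shift]
      split_ifs at this ⊢ <;> exact this
  | const _ | type | kind => rfl
  | pi A B ihA ihB | lam A B ihA ihB =>
      have hlift : ∀ m, liftSub σ (if m < c + 1 then m else m + 1) = var m := by
        rintro (_ | m)
        · rfl
        · have hm : (if m + 1 < c + 1 then m + 1 else m + 1 + 1) =
              (if m < c then m else m + 1) + 1 := by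
            split_ifs <;> omega
          rw [hm]
          simp [liftSub, hσ m, shift]
      simp [shift, subst, ihA hσ, ihB hlift]
  | app M N ihM ihN => simp [shift, subst, ihM hσ, ihN hσ]

theorem subst0_shift (M N : DTm) : (shift 1 0 M).subst0 N = M :=
  subst_shift_one_eq_self (fun _ => rfl) M

end DTm

theorem transTy_shift (d : ℕ) (ρ : ℕ → ℕ) :
    ∀ A : HTy, DTm.shift d 0 (transTy ρ A) = transTy (fun j => ρ j + d) A
  | .tvar j => by simp [transTy, DTm.shift]
  | .bool | .ind => rfl
  | .arr A B => by simp [transTy, tArr, DTm.shift, transTy_shift d ρ A, transTy_shift d ρ B]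

theorem liftVar_id : liftVar (fun i => i) = fun i => i := by
  funext i; cases i <;> rfl

theorem HTyped.tvLt {n : ℕ} {Δ : List HTy} {M : HTm} {A : HTy} (h : HTyped Δ M A)
    (hM : M.tvLt n) (hΔ : ∀ B ∈ Δ, B.tvLt n) : A.tvLt n := by
  induction h with
  | var hl =>
      obtain ⟨hi, rfl⟩ := List.getElem?_eq_some_iff.mp hl
      exact hΔ _ (List.getElem_mem hi)
  | lam _ ih => exact ⟨hM.1, ih hM.2 (List.forall_mem_cons.2 ⟨hM.1, hΔ⟩)⟩
  | app _ _ ihM _ => exact (ihM hM.1 hΔ).2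
  | eq => exact ⟨hM, hM, trivial⟩
  | select => exact ⟨⟨hM, trivial⟩, hM⟩

/-- An entry of a context is typed in the part of the context below it, hence the shift. -/
def varType (G : List DTm) (k : ℕ) : Option DTm := G[k]?.map (DTm.shift (k + 1) 0)

theorem varType_cons_zero (A : DTm) (G : List DTm) :
    varType (A :: G) 0 = some (DTm.shift 1 0 A) := rfl

theorem varType_cons_succ (A : DTm) (G : List DTm) (k : ℕ) :
    varType (A :: G) (k + 1) = (varType G k).map (DTm.shift 1 0) := by
  cases h : G[k]? <;> simp [varType, h, DTm.shift_shift, Nat.add_comm 1]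

theorem Typed.var_of_varType {S : Sig} {G : List DTm} {k : ℕ} {T : DTm} (hG : CtxWf S G)
    (h : varType G k = some T) : Typed S G (.var k) T := by
  obtain ⟨A, hA, rfl⟩ := Option.map_eq_some_iff.mp h
  exact Typed.var hG hA

structure Sig.DeclaresTypes (S : Sig) : Prop where
  type : S.constType 0 = some .type
  bool : S.constType 1 = some cTy
  ind : S.constType 2 = some cTy
  arrow : S.constType 3 = some tyArrow
  term : S.constType 4 = some tyTerm

structure Sig.DeclaresHol (S : Sig) : Prop extends S.DeclaresTypes where
  eq : S.constType 5 = some tyEq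
  select : S.constType 6 = some tySelect
  proof : S.constType 7 = some tyProof
  arrowRule : S.hasRule arrowRuleCtx arrowRuleL arrowRuleR

theorem Sig.DeclaresHol.pushConst {S : Sig} {c : ℕ} {A : DTm} (hS : S.DeclaresHol)
    (hc : S.constType c = none) : (S.pushConst c A).DeclaresHol := by
  have keep : ∀ {d B}, S.constType d = some B → (S.pushConst c A).constType d = some B := by
    intro d B hd
    have hdc : d ≠ c := by rintro rfl; simp [hd] at hc
    simp [Sig.constType, hdc, hd]
  exact ⟨⟨keep hS.type, keep hS.bool, keep hS.ind, keep hS.arrow, keep hS.term⟩,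
    keep hS.eq, keep hS.select, keep hS.proof, hS.arrowRule⟩

section Typing

variable {S : Sig} {G : List DTm}

theorem typed_cTy (h0 : S.constType 0 = some .type) (hG : CtxWf S G) : Typed S G cTy .type :=
  .const hG h0

theorem typed_tArr (hS : S.DeclaresTypes) (hG : CtxWf S G) {a b : DTm}
    (ha : Typed S G a cTy) (hb : Typed S G b cTy) : Typed S G (tArr a b) cTy :=
  .app (.app (.const hG hS.arrow) ha) hb

theorem typed_tTerm (hS : S.DeclaresTypes) (hG : CtxWf S G) {a : DTm}
    (ha : Typed S G a cTy) : Typed S G (tTerm a) .type :=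
  .app (.const hG hS.term) ha

theorem typed_tProof (hS : S.DeclaresHol) (hG : CtxWf S G) {p : DTm}
    (hp : Typed S G p (tTerm dBool)) : Typed S G (tProof p) .type :=
  .app (.const hG hS.proof) hp

theorem conv_tTerm_tArr (hS : S.DeclaresHol) (a b : DTm) :
    Conv S (tTerm (tArr a b)) (DTm.arr (tTerm a) (tTerm b)) :=
  .rel _ _ (.rew (fun | 0 => b | 1 => a | n + 2 => .var n) hS.arrowRule)

theorem typed_app_of_tArr (hS : S.DeclaresHol) (hG : CtxWf S G) {a b M N : DTm}
    (ha : Typed S G a cTy) (hb : Typed S (tTerm a :: G) (DTm.shift 1 0 b) cTy)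
    (hM : Typed S G M (tTerm (tArr a b))) (hN : Typed S G N (tTerm a)) :
    Typed S G (.app M N) (tTerm b) := by
  have hTa := typed_tTerm hS.toDeclaresTypes hG ha
  have hpi : Typed S G (DTm.arr (tTerm a) (tTerm b)) .type :=
    .prod hTa (typed_tTerm hS.toDeclaresTypes (.cons hG hTa) hb) (.inl rfl)
  simpa only [DTm.subst0_shift] using Typed.app (.conv hM hpi (conv_tTerm_tArr hS a b)) hN

end Typing

structure TranslatesCtx (S : Sig) (G : List DTm) (n : ℕ) (Δ : List HTy) (ρT ρt : ℕ → ℕ) :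
    Prop where
  ctxWf : CtxWf S G
  tyVar : ∀ j < n, varType G (ρT j) = some cTy
  tmVar : ∀ i B, Δ[i]? = some B → varType G (ρt i) = some (tTerm (transTy ρT B))
  tvLt : ∀ B ∈ Δ, B.tvLt n

/-- The types of the axioms `Refl`, `FunExt`, `AppThm`, `PropExt` and `EqMp` are translations
of such statements. -/
inductive HStmt : Type
  | prop : HTm → HStmt
  | imp : HStmt → HStmt → HStmt
  | all : HTy → HStmt → HStmt

/-- Under a binder the index maps are shifted rather than the translated term, so the
translation of `imp P Q` computes to `DTm.arr` of the translations of `P` and `Q`. -/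
def transStmt (ρT ρt : ℕ → ℕ) : HStmt → DTm
  | .prop φ => tProof (transTm ρT ρt φ)
  | .imp P Q => .pi (transStmt ρT ρt P) (transStmt (fun j => ρT j + 1) (fun i => ρt i + 1) Q)
  | .all A P => .pi (tTerm (transTy ρT A)) (transStmt (fun j => ρT j + 1) (liftVar ρt) P)

def HStmt.WF (n : ℕ) : List HTy → HStmt → Prop
  | Δ, .prop φ => HTyped Δ φ .bool ∧ φ.tvLt n
  | Δ, .imp P Q => P.WF n Δ ∧ Q.WF n Δ
  | Δ, .all A P => A.tvLt n ∧ P.WF n (A :: Δ)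

namespace TranslatesCtx

variable {S : Sig} {G : List DTm} {n : ℕ} {Δ : List HTy} {ρT ρt : ℕ → ℕ}

theorem replicate (h0 : S.constType 0 = some .type) (hw : SigWf S) (n : ℕ) :
    TranslatesCtx S (List.replicate n cTy) n [] (fun j => j) (fun i => i) := by
  have hG : ∀ m, CtxWf S (List.replicate m cTy) := by
    intro m
    induction m with
    | zero => exact .nil hw
    | succ m ih => exact .cons ih (typed_cTy h0 ih)
  refine ⟨hG n, fun j hj => ?_, by simp, by simp⟩
  simp [varType, hj, cTy, DTm.shift]

theorem weaken (h : TranslatesCtx S G n Δ ρT ρt) {A : DTm} (hA : Typed S G A .type) :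
    TranslatesCtx S (A :: G) n Δ (fun j => ρT j + 1) (fun i => ρt i + 1) where
  ctxWf := .cons h.ctxWf hA
  tyVar j hj := by simp [varType_cons_succ, h.tyVar j hj, cTy, DTm.shift]
  tmVar i B hB := by simp [varType_cons_succ, h.tmVar i B hB, tTerm, DTm.shift, transTy_shift]
  tvLt := h.tvLt

theorem typed_transTy (hS : S.DeclaresTypes) (h : TranslatesCtx S G n Δ ρT ρt) :
    ∀ {A : HTy}, A.tvLt n → Typed S G (transTy ρT A) cTy
  | .tvar j, hj => .var_of_varType h.ctxWf (h.tyVar j hj)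
  | .bool, _ => .const h.ctxWf hS.bool
  | .ind, _ => .const h.ctxWf hS.ind
  | .arr _ _, hAB =>
      typed_tArr hS h.ctxWf (h.typed_transTy hS hAB.1) (h.typed_transTy hS hAB.2)

theorem bindTerm (hS : S.DeclaresTypes) (h : TranslatesCtx S G n Δ ρT ρt) {A : HTy}
    (hA : A.tvLt n) :
    TranslatesCtx S (tTerm (transTy ρT A) :: G) n (A :: Δ) (fun j => ρT j + 1) (liftVar ρt) := by
  have hw := h.weaken (typed_tTerm hS h.ctxWf (h.typed_transTy hS hA))
  refine ⟨hw.ctxWf, hw.tyVar, ?_, List.forall_mem_cons.2 ⟨hA, h.tvLt⟩⟩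
  rintro (_ | i) B hB
  · obtain rfl : A = B := by simpa using hB
    simp [liftVar, varType_cons_zero, tTerm, DTm.shift, transTy_shift]
  · exact hw.tmVar i B (by simpa using hB)

theorem typed_transTm (hS : S.DeclaresHol) (h : TranslatesCtx S G n Δ ρT ρt) {M : HTm}
    {A : HTy} (hM : HTyped Δ M A) (hMn : M.tvLt n) :
    Typed S G (transTm ρT ρt M) (tTerm (transTy ρT A)) := by
  have hT := hS.toDeclaresTypes
  induction hM generalizing G ρT ρt with
  | var hl => exact .var_of_varType h.ctxWf (h.tmVar _ _ hl)
  | @lam Δ A B M hM ih =>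
      have hB : B.tvLt n := hM.tvLt hMn.2 (List.forall_mem_cons.2 ⟨hMn.1, h.tvLt⟩)
      have hA := h.typed_transTy hT hMn.1
      have hbody := ih (h.bindTerm hT hMn.1) hMn.2
      rw [← transTy_shift] at hbody
      refine .conv (.abs (typed_tTerm hT h.ctxWf hA) hbody) ?_
        (.symm _ _ (conv_tTerm_tArr hS _ _))
      exact typed_tTerm hT h.ctxWf (typed_tArr hT h.ctxWf hA (h.typed_transTy hT hB))
  | @app Δ A B M N hM _ ihM ihN =>
      have hAB : (A.arr B).tvLt n := hM.tvLt hMn.1 h.tvLt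
      have hA := h.typed_transTy hT hAB.1
      have hB := (h.weaken (typed_tTerm hT h.ctxWf hA)).typed_transTy hT hAB.2
      rw [← transTy_shift] at hB
      exact typed_app_of_tArr hS h.ctxWf hA hB (ihM h hMn.1) (ihN h hMn.2)
  | eq => exact .app (.const h.ctxWf hS.eq) (h.typed_transTy hT hMn)
  | select => exact .app (.const h.ctxWf hS.select) (h.typed_transTy hT hMn)

theorem typed_tProof_transTm (hS : S.DeclaresHol) (h : TranslatesCtx S G n Δ ρT ρt) {φ : HTm}
    (hφ : HTyped Δ φ .bool) (hφn : φ.tvLt n) : Typed S G (tProof (transTm ρT ρt φ)) .type :=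
  typed_tProof hS h.ctxWf (h.typed_transTm hS hφ hφn)

theorem typed_transStmt (hS : S.DeclaresHol) (h : TranslatesCtx S G n Δ ρT ρt) {P : HStmt}
    (hP : P.WF n Δ) : Typed S G (transStmt ρT ρt P) .type := by
  induction P generalizing G Δ ρT ρt with
  | prop φ => exact h.typed_tProof_transTm hS hP.1 hP.2
  | imp P Q ihP ihQ =>
      have hP' := ihP h hP.1
      exact .prod hP' (ihQ (h.weaken hP') hP.2) (.inl rfl)
  | all A P ih =>
      have hT := hS.toDeclaresTypes
      exact .prod (typed_tTerm hT h.ctxWf (h.typed_transTy hT hP.1))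
        (ih (h.bindTerm hT hP.1) hP.2) (.inl rfl)

theorem dTermCtx_append_replicate (hS : S.DeclaresTypes) (hw : SigWf S) :
    ∀ {Δ : List HTy}, (∀ B ∈ Δ, B.tvLt n) →
      TranslatesCtx S (dTermCtx Δ ++ List.replicate n cTy) n Δ (fun j => Δ.length + j)
        (fun i => i)
  | [], _ => by simpa [dTermCtx] using replicate hS.type hw n
  | A :: Δ, hΔ => by
      obtain ⟨hA, hΔ⟩ := List.forall_mem_cons.1 hΔ
      have hρT : (fun j => (A :: Δ).length + j) = fun j => Δ.length + j + 1 := by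
        funext j; simp only [List.length_cons]; omega
      rw [hρT, ← liftVar_id]
      exact (dTermCtx_append_replicate hS hw hΔ).bindTerm hS hA

end TranslatesCtx

def piTypes (n : ℕ) (B : DTm) : DTm := (DTm.pi cTy)^[n] B

theorem typed_piTypes {S : Sig} (h0 : S.constType 0 = some .type) (hw : SigWf S) {s : DTm}
    (hs : s = .type ∨ s = .kind) :
    ∀ {n : ℕ} {B : DTm}, Typed S (List.replicate n cTy) B s → Typed S [] (piTypes n B) s
  | 0, _, hB => hB
  | n + 1, _, hB => by
      have hG := (TranslatesCtx.replicate h0 hw n).ctxWf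
      rw [piTypes, Function.iterate_succ_apply]
      exact typed_piTypes h0 hw hs (.prod (typed_cTy h0 hG) hB hs)

section Signature

variable {S : Sig}

theorem SigWf.pushConst_tTerm (hw : SigWf S) (hS : S.DeclaresTypes) {n : ℕ} {A : HTy}
    (hA : A.tvLt n) {c : ℕ} (hc : S.constType c = none) :
    SigWf (S.pushConst c (piTypes n (tTerm (transTy (fun j => j) A)))) :=
  have h := TranslatesCtx.replicate hS.type hw n
  .pushConst hw (typed_piTypes hS.type hw (.inl rfl)
    (typed_tTerm hS h.ctxWf (h.typed_transTy hS hA))) (.inl rfl) hc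

theorem SigWf.pushConst_transStmt (hw : SigWf S) (hS : S.DeclaresHol) {n : ℕ} {P : HStmt}
    (hP : P.WF n []) {c : ℕ} (hc : S.constType c = none) :
    SigWf (S.pushConst c (piTypes n (transStmt (fun j => j) (fun i => i) P))) :=
  .pushConst hw (typed_piTypes hS.type hw (.inl rfl)
    ((TranslatesCtx.replicate hS.type hw n).typed_transStmt hS hP)) (.inl rfl) hc

theorem SigWf.pushRule_arrow (hw : SigWf S) (hS : S.DeclaresTypes) :
    SigWf (S.pushRule arrowRuleCtx arrowRuleL arrowRuleR) := by
  have h := TranslatesCtx.replicate hS.type hw 2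
  have hα : Typed S arrowRuleCtx (tTerm (transTy (fun j => j) (.tvar 1))) .type :=
    typed_tTerm hS h.ctxWf (h.typed_transTy hS (A := .tvar 1) Nat.one_lt_two)
  have hβ := (h.weaken hα).typed_transTy hS (A := .tvar 0) Nat.two_pos
  have hL := h.typed_transTy hS (A := .arr (.tvar 1) (.tvar 0)) ⟨Nat.one_lt_two, Nat.two_pos⟩
  exact .pushRule (A := .type) hw (typed_tTerm hS h.ctxWf hL)
    (.prod hα (typed_tTerm hS (h.weaken hα).ctxWf hβ) (.inl rfl))

theorem SigWf.pushConst_tyProof (hw : SigWf S) (hS : S.DeclaresTypes)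
    (hc : S.constType 7 = none) : SigWf (S.pushConst 7 tyProof) :=
  have hBool := typed_tTerm hS (.nil hw) (.const (.nil hw) hS.bool)
  .pushConst hw (.prod hBool (.type (.cons (.nil hw) hBool)) (.inr rfl)) (.inr rfl) hc

end Signature

theorem baseSig_wf : SigWf baseSig := by
  have w1 := SigWf.pushConst (c := 0) .empty (.type (.nil .empty)) (.inr rfl) rfl
  have w2 := SigWf.pushConst (c := 1) w1 (typed_cTy rfl (.nil w1)) (.inl rfl) rfl
  have w3 := SigWf.pushConst (c := 2) w2 (typed_cTy rfl (.nil w2)) (.inl rfl) rfl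
  have w4 := SigWf.pushConst (c := 3) w3 (typed_piTypes (n := 2) rfl w3 (.inl rfl)
    (typed_cTy rfl (TranslatesCtx.replicate rfl w3 2).ctxWf)) (.inl rfl) rfl
  exact SigWf.pushConst (c := 4) w4 (typed_piTypes (n := 1) rfl w4 (.inr rfl)
    (.type (TranslatesCtx.replicate rfl w4 1).ctxWf)) (.inr rfl) rfl

def holCoreSig : Sig :=
  (((baseSig.pushConst 5 tyEq).pushConst 6 tySelect).pushRule arrowRuleCtx arrowRuleL
    arrowRuleR).pushConst 7 tyProof

theorem holCoreSig_wf : SigWf holCoreSig := by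
  have w5 := baseSig_wf.pushConst_tTerm ⟨rfl, rfl, rfl, rfl, rfl⟩ (n := 1)
    (A := .arr (.tvar 0) (.arr (.tvar 0) .bool)) ⟨Nat.one_pos, Nat.one_pos, trivial⟩ (c := 5) rfl
  have w6 := w5.pushConst_tTerm ⟨rfl, rfl, rfl, rfl, rfl⟩ (n := 1)
    (A := .arr (.arr (.tvar 0) .bool) (.tvar 0)) ⟨⟨Nat.one_pos, trivial⟩, Nat.one_pos⟩ (c := 6) rfl
  exact (w6.pushRule_arrow ⟨rfl, rfl, rfl, rfl, rfl⟩).pushConst_tyProof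
    ⟨rfl, rfl, rfl, rfl, rfl⟩ rfl

theorem holCoreSig_declaresHol : holCoreSig.DeclaresHol :=
  ⟨⟨rfl, rfl, rfl, rfl, rfl⟩, rfl, rfl, rfl, .inl ⟨rfl, rfl, rfl⟩⟩

section Axioms

open HTm

/-- `∀x : α. x = x`, with `α` the type variable `0`. -/
def reflStmt : HStmt := .all (.tvar 0) (.prop (heq (.tvar 0) (.var 0) (.var 0)))

/-- `∀f g : α → β. (∀x : α. f x = g x) ⇒ f = g`, with `α`, `β` the type variables `1`, `0`. -/
def funExtStmt : HStmt :=
  .all (.arr (.tvar 1) (.tvar 0)) (.all (.arr (.tvar 1) (.tvar 0))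
    (.imp
      (.all (.tvar 1) (.prop (heq (.tvar 0) (.app (.var 2) (.var 0)) (.app (.var 1) (.var 0)))))
      (.prop (heq (.arr (.tvar 1) (.tvar 0)) (.var 1) (.var 0)))))

/-- `∀f g : α → β. ∀x y : α. f = g ⇒ x = y ⇒ f x = g y`. -/
def appThmStmt : HStmt :=
  .all (.arr (.tvar 1) (.tvar 0)) (.all (.arr (.tvar 1) (.tvar 0))
    (.all (.tvar 1) (.all (.tvar 1)
      (.imp (.prop (heq (.arr (.tvar 1) (.tvar 0)) (.var 3) (.var 2)))
        (.imp (.prop (heq (.tvar 1) (.var 1) (.var 0)))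
          (.prop (heq (.tvar 0) (.app (.var 3) (.var 1)) (.app (.var 2) (.var 0)))))))))

/-- `∀p q : bool. (q ⇒ p) ⇒ (q ⇒ p) ⇒ p = q`. -/
def propExtStmt : HStmt :=
  .all .bool (.all .bool
    (.imp (.imp (.prop (.var 0)) (.prop (.var 1)))
      (.imp (.imp (.prop (.var 0)) (.prop (.var 1))) (.prop (heq .bool (.var 1) (.var 0))))))

/-- `∀p q : bool. p = q ⇒ p ⇒ q`. -/
def eqMpStmt : HStmt :=
  .all .bool (.all .bool
    (.imp (.prop (heq .bool (.var 1) (.var 0))) (.imp (.prop (.var 1)) (.prop (.var 0)))))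

theorem axiomStmts_wf :
    reflStmt.WF 1 [] ∧ funExtStmt.WF 2 [] ∧ appThmStmt.WF 2 [] ∧ propExtStmt.WF 0 [] ∧
      eqMpStmt.WF 0 [] := by
  refine ⟨?_, ?_, ?_, ?_, ?_⟩ <;>
    simp only [reflStmt, funExtStmt, appThmStmt, propExtStmt, eqMpStmt, HStmt.WF, heq,
      HTm.tvLt, HTy.tvLt] <;>
    repeat' constructor

end Axioms

theorem holSig_wf : SigWf holSig := by
  -- `tyRefl`, …, `tyEqMp` compute to `piTypes n (transStmt _ _ P)` for the statements above.
  obtain ⟨hRefl, hFunExt, hAppThm, hPropExt, hEqMp⟩ := axiomStmts_wf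
  have h := holCoreSig_declaresHol
  have w8 := holCoreSig_wf.pushConst_transStmt h hRefl (c := 8) rfl
  have w9 := w8.pushConst_transStmt (h.pushConst rfl) hFunExt (c := 9) rfl
  have w10 := w9.pushConst_transStmt ((h.pushConst rfl).pushConst rfl) hAppThm (c := 10) rfl
  have w11 := w10.pushConst_transStmt (((h.pushConst rfl).pushConst rfl).pushConst rfl) hPropExt
    (c := 11) rfl
  exact w11.pushConst_transStmt ((((h.pushConst rfl).pushConst rfl).pushConst rfl).pushConst rfl)
    hEqMp (c := 12) rfl

theorem holSig_declaresHol : holSig.DeclaresHol :=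
  ⟨⟨rfl, rfl, rfl, rfl, rfl⟩, rfl, rfl, rfl, .inl ⟨rfl, rfl, rfl⟩⟩

/-- For any HOL proposition `φ` (a HOL term of type `bool`), with free type
variables `α₁, …, αₙ` and free term variables `x₁:A₁, …, xₖ:Aₖ`, the translation
of `φ` as a type is a well-formed Dedukti type:
`Σ | α₁:type, …, αₙ:type, x₁:‖A₁‖, …, xₖ:‖Aₖ‖ ⊢ ‖φ‖ : Type`,
where `‖φ‖ = proof |φ|`. -/
theorem hol_prop_translation_is_type (n : ℕ) (Δ : List HTy) (φ : HTm)
    (ht : HTyped Δ φ .bool) (hφ : φ.tvLt n) (hΔ : ∀ B ∈ Δ, B.tvLt n) :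
    Typed holSig (dTermCtx Δ ++ List.replicate n cTy)
      (tProof (transTm (fun j => Δ.length + j) (fun i => i) φ)) DTm.type :=
  have hS := holSig_declaresHol
  (TranslatesCtx.dTermCtx_append_replicate hS.toDeclaresTypes holSig_wf hΔ).typed_tProof_transTm
    hS ht hφ

end HolDk
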